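/- For all complex numbers x, y with x ≠ 0, y ≠ 0 and x + y ≠ 0, one has R̂₁₂(x) R̂₁₃(x+y) R₂₃(y) = R₂₃(y) R̂₁₃(x+y) R̂₁₂(x) as operators on (ℂⁿ)^{⊗3}. -/

import Mathlib

/-!
Write `A = P̂₁₂`, `C = P₂₃` and `B = P̂₁₃`. Conjugating by the flip moves the second tensor
factor to the third, so `B = C A C`, and `C² = 1`. In coordinates `P̂ = (G⁻¹ ⊗ G) P`, and
contracting the middle index turns `A B` into `C A` (this is `G G⁻¹ = 1`). These two relations
force `AB = BC = CA` and `BA = CB = AC`, so after expanding both sides of the equation only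
`(ab + bc - ac) • (CA - AC)` survives, with `a = x⁻¹`, `b = (x + y)⁻¹`, `c = y⁻¹`, and
`1 / (x (x + y)) + 1 / ((x + y) y) = 1 / (x y)`.
-/

noncomputable section
open scoped Kronecker
open Matrix

/-- Square matrices acting on the tensor power `(ℂⁿ)^{⊗ι}`, modelled on the
function basis `ι → Fin n`. -/
abbrev TMat (ι : Type) (n : ℕ) := Matrix (ι → Fin n) (ι → Fin n) ℂ

/-- The matrix units `E_{ij}` of `End(ℂⁿ)`. -/
def matE (n : ℕ) (i j : Fin n) : Matrix (Fin n) (Fin n) ℂ := Matrix.single i j 1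

/-- The flip `P = Σ E_{ij} ⊗ E_{ji}` on `ℂⁿ ⊗ ℂⁿ`. -/
def flipP (n : ℕ) : Matrix (Fin n × Fin n) (Fin n × Fin n) ℂ :=
  ∑ i : Fin n, ∑ j : Fin n, matE n i j ⊗ₖ matE n j i

/-- `P̄ = Σ E_{ij} ⊗ E_{ij}` on `ℂⁿ ⊗ ℂⁿ`. -/
def PbarM (n : ℕ) : Matrix (Fin n × Fin n) (Fin n × Fin n) ℂ :=
  ∑ i : Fin n, ∑ j : Fin n, matE n i j ⊗ₖ matE n i j

/-- The conjugate `X̃ = G⁻¹ Xᵀ G` of `X` relative to the bilinear form with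
Gram matrix `G`, i.e. `⟨X u, v⟩ = ⟨u, X̃ v⟩` where `⟨u, v⟩ = uᵀ G v`. -/
def conjF {n : ℕ} (G X : Matrix (Fin n) (Fin n) ℂ) : Matrix (Fin n) (Fin n) ℂ :=
  G⁻¹ * Xᵀ * G

/-- `P̃ = Σ Ẽ_{ij} ⊗ E_{ji}`. -/
def PtilM (n : ℕ) (G : Matrix (Fin n) (Fin n) ℂ) : Matrix (Fin n × Fin n) (Fin n × Fin n) ℂ :=
  ∑ i : Fin n, ∑ j : Fin n, conjF G (matE n i j) ⊗ₖ matE n j i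

/-- `P̂ = Σ Ẽ_{ij} ⊗ E_{ij}`. -/
def PhatM (n : ℕ) (G : Matrix (Fin n) (Fin n) ℂ) : Matrix (Fin n × Fin n) (Fin n × Fin n) ℂ :=
  ∑ i : Fin n, ∑ j : Fin n, conjF G (matE n i j) ⊗ₖ matE n i j

/-- The Yang R-matrix `R(x) = 1 − P x⁻¹`. -/
def Rm (n : ℕ) (x : ℂ) : Matrix (Fin n × Fin n) (Fin n × Fin n) ℂ := 1 - x⁻¹ • flipP n

/-- `R̄(x) = 1 − P̄ x⁻¹`. -/
def RbarM (n : ℕ) (x : ℂ) : Matrix (Fin n × Fin n) (Fin n × Fin n) ℂ := 1 - x⁻¹ • PbarM n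

/-- `R̃(x) = 1 − P̃ x⁻¹`. -/
def RtilM (n : ℕ) (G : Matrix (Fin n) (Fin n) ℂ) (x : ℂ) :
    Matrix (Fin n × Fin n) (Fin n × Fin n) ℂ := 1 - x⁻¹ • PtilM n G

/-- `R̂(x) = 1 − P̂ x⁻¹`. -/
def RhatM (n : ℕ) (G : Matrix (Fin n) (Fin n) ℂ) (x : ℂ) :
    Matrix (Fin n × Fin n) (Fin n × Fin n) ℂ := 1 - x⁻¹ • PhatM n G

/-- `Z_{ij}` : the operator on a tensor power of `ℂⁿ` acting as the two-factor
operator `Z` in the `i`-th and `j`-th tensor factors and as the identity elsewhere. -/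
def lift2 {n : ℕ} {ι : Type} [Fintype ι] [DecidableEq ι] (i j : ι)
    (Z : Matrix (Fin n × Fin n) (Fin n × Fin n) ℂ) : TMat ι n :=
  fun f g => Z (f i, f j) (g i, g j) *
    ∏ p : ι, if p = i ∨ p = j then 1 else (if f p = g p then 1 else 0)


variable {n : ℕ}

lemma flipP_apply (a b c d : Fin n) :
    flipP n (a, b) (c, d) = if a = d ∧ b = c then 1 else 0 := by
  simp [flipP, matE, Matrix.single, ite_and, Finset.sum_ite_eq, Matrix.sum_apply, eq_comm]

lemma PhatM_apply (G : Matrix (Fin n) (Fin n) ℂ) (a b c d : Fin n) :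
    PhatM n G (a, b) (c, d) = G⁻¹ a d * G b c := by
  simp [PhatM, conjF, matE, Matrix.mul_apply, Matrix.single, ite_and, Finset.sum_ite_eq,
    Finset.sum_ite_eq', ite_mul, mul_ite, Matrix.sum_apply]

section Lift

variable {ι : Type} [Fintype ι] [DecidableEq ι]

lemma lift2_apply (i j : ι) (Z : Matrix (Fin n × Fin n) (Fin n × Fin n) ℂ) (f g : ι → Fin n) :
    lift2 i j Z f g = if ∀ p, p ≠ i → p ≠ j → f p = g p then Z (f i, f j) (g i, g j) else 0 := by
  have hfactor (p : ι) : (if p = i ∨ p = j then (1 : ℂ) else if f p = g p then 1 else 0)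
      = if p ≠ i → p ≠ j → f p = g p then 1 else 0 := by
    by_cases hi : p = i <;> by_cases hj : p = j <;> simp [hi, hj]
  simp only [lift2, hfactor, Finset.prod_boole, Finset.mem_univ, true_implies, mul_ite,
    mul_one, mul_zero]

lemma lift2_one (i j : ι) : lift2 i j (1 : Matrix (Fin n × Fin n) (Fin n × Fin n) ℂ) = 1 := by
  ext f g
  rw [lift2_apply, Matrix.one_apply, Matrix.one_apply]
  by_cases hfg : f = g
  · simp [hfg]
  · simp only [hfg, if_false, Prod.mk.injEq, ite_eq_right_iff, one_ne_zero, imp_false, not_and]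
    intro hrest hi hj
    exact hfg <| funext fun p =>
      if hpi : p = i then hpi ▸ hi else if hpj : p = j then hpj ▸ hj else hrest p hpi hpj

lemma lift2_sub (i j : ι) (Z W : Matrix (Fin n × Fin n) (Fin n × Fin n) ℂ) :
    lift2 i j (Z - W) = lift2 i j Z - lift2 i j W := by
  ext f g
  simp only [lift2, Matrix.sub_apply, sub_mul]

lemma lift2_smul (i j : ι) (s : ℂ) (Z : Matrix (Fin n × Fin n) (Fin n × Fin n) ℂ) :
    lift2 i j (s • Z) = s • lift2 i j Z := by
  ext f g
  simp only [lift2, Matrix.smul_apply, smul_eq_mul, mul_assoc]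

end Lift

section Swap

variable {ι : Type} [DecidableEq ι]

def swapFactors (n : ℕ) (j k : ι) : (ι → Fin n) ≃ (ι → Fin n) :=
  (Equiv.swap j k).arrowCongr (Equiv.refl (Fin n))

@[simp]
lemma swapFactors_apply (j k : ι) (f : ι → Fin n) (p : ι) :
    swapFactors n j k f p = f (Equiv.swap j k p) := rfl

lemma swapFactors_symm (j k : ι) : (swapFactors n j k).symm = swapFactors n j k := by
  simp [swapFactors, Equiv.arrowCongr_symm]

variable [Fintype ι]

lemma lift2_flipP (j k : ι) :
    lift2 j k (flipP n) = (1 : TMat ι n).submatrix (swapFactors n j k) id := by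
  ext f g
  rw [lift2_apply, flipP_apply, Matrix.submatrix_apply, Matrix.one_apply, ← ite_and]
  refine if_congr ?_ rfl rfl
  simp only [funext_iff, swapFactors_apply, id]
  constructor
  · rintro ⟨hrest, hj, hk⟩ p
    rcases eq_or_ne p j with rfl | hpj
    · simpa using hk
    rcases eq_or_ne p k with rfl | hpk
    · simpa using hj
    simpa [Equiv.swap_apply_of_ne_of_ne hpj hpk] using hrest p hpj hpk
  · intro h
    refine ⟨fun p hpj hpk => ?_, by simpa using h k, by simpa using h j⟩
    simpa [Equiv.swap_apply_of_ne_of_ne hpj hpk] using h p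

lemma lift2_submatrix_swapFactors {i j k : ι} (hij : i ≠ j) (hik : i ≠ k)
    (Z : Matrix (Fin n × Fin n) (Fin n × Fin n) ℂ) :
    (lift2 i j Z).submatrix (swapFactors n j k) (swapFactors n j k) = lift2 i k Z := by
  ext f g
  simp only [Matrix.submatrix_apply, lift2_apply, swapFactors_apply, Equiv.swap_apply_left,
    Equiv.swap_apply_of_ne_of_ne hij hik]
  refine if_congr ?_ rfl rfl
  have hswap_ne {p q : ι} (hpq : p ≠ q) : Equiv.swap j k p ≠ Equiv.swap j k q :=
    (Equiv.swap j k).injective.ne hpq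
  have hswap_i : Equiv.swap j k i = i := Equiv.swap_apply_of_ne_of_ne hij hik
  constructor
  · intro h p hpi hpk
    simpa using h (Equiv.swap j k p) (by simpa [hswap_i] using hswap_ne hpi)
      (by simpa using hswap_ne hpk)
  · intro h p hpi hpj
    exact h _ (by simpa [hswap_i] using hswap_ne hpi) (by simpa using hswap_ne hpj)

lemma lift2_flipP_mul (j k : ι) (M : TMat ι n) :
    lift2 j k (flipP n) * M = M.submatrix (swapFactors n j k) id := by
  rw [lift2_flipP]
  simpa using Matrix.one_submatrix_mul (swapFactors n j k) (Equiv.refl _) M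

lemma mul_lift2_flipP (j k : ι) (M : TMat ι n) :
    M * lift2 j k (flipP n) = M.submatrix id (swapFactors n j k) := by
  rw [lift2_flipP, Matrix.mul_submatrix_one, swapFactors_symm, Function.comp_id]

lemma lift2_flipP_mul_self (j k : ι) : lift2 j k (flipP n) * lift2 j k (flipP n) = 1 := by
  rw [lift2_flipP_mul, lift2_flipP, Matrix.submatrix_submatrix]
  nth_rw 1 [← swapFactors_symm]
  rw [Equiv.symm_comp_self, Function.id_comp, Matrix.submatrix_id_id]

lemma lift2_flipP_mul_lift2_mul_lift2_flipP {i j k : ι} (hij : i ≠ j) (hik : i ≠ k)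
    (Z : Matrix (Fin n × Fin n) (Fin n × Fin n) ℂ) :
    lift2 j k (flipP n) * lift2 i j Z * lift2 j k (flipP n) = lift2 i k Z := by
  rw [lift2_flipP_mul, mul_lift2_flipP, Matrix.submatrix_submatrix, Function.id_comp,
    Function.comp_id, lift2_submatrix_swapFactors hij hik]

end Swap

theorem yang_baxter_of_involution {K R : Type*} [CommRing K] [Ring R] [Algebra K R] {A C : R}
    (hC : C * C = 1) (hAC : A * (C * A * C) = C * A) {a b c : K}
    (habc : a * b + b * c = a * c) :
    (1 - a • A) * (1 - b • (C * A * C)) * (1 - c • C)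
      = (1 - c • C) * (1 - b • (C * A * C)) * (1 - a • A) := by
  set B := C * A * C with hB
  have hBC : B * C = C * A := by rw [hB, mul_assoc, hC, mul_one]
  have hCB : C * B = A * C := by rw [hB, ← mul_assoc, ← mul_assoc, hC, one_mul]
  have hBA : B * A = A * C := by
    calc B * A = C * (A * B) * C := by simp only [hB, mul_assoc, hC, mul_one]
      _ = A * C := by rw [hAC, ← mul_assoc, hC, one_mul]
  have hABC : A * (B * C) = C * (B * A) := by
    calc A * (B * C) = A * B * C := by simp only [hB, mul_assoc, hC, mul_one]
      _ = C * (B * A) := by rw [hAC, hBA, mul_assoc]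
  simp only [sub_mul, mul_sub, one_mul, mul_one, smul_mul_assoc, mul_smul_comm, mul_assoc]
  linear_combination (norm := module) (a * b) • hAC - (a * b) • hBA + (b * c) • hBC
    - (b * c) • hCB - (a * b * c) • hABC + habc • (C * A - A * C)

lemma sum_fin3_fun {α M : Type*} [Fintype α] [AddCommMonoid M] (F : (Fin 3 → α) → M) :
    ∑ h, F h = ∑ a, ∑ b, ∑ c, F ![a, b, c] := by
  simp only [← (Fin.consEquiv fun _ => α).sum_comp, Fintype.sum_prod_type, Fintype.sum_unique]
  rfl

lemma lift2_fin3_apply {i j k : Fin 3} (hij : i ≠ j) (hik : i ≠ k) (hjk : j ≠ k)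
    (Z : Matrix (Fin n × Fin n) (Fin n × Fin n) ℂ) (f g : Fin 3 → Fin n) :
    lift2 i j Z f g = Z (f i, f j) (g i, g j) * if f k = g k then 1 else 0 := by
  have hothers : ∀ p, p ≠ i → p ≠ j → p = k := by
    revert i j k; decide
  rw [lift2_apply]
  by_cases hk : f k = g k
  · rw [if_pos fun p hpi hpj => hothers p hpi hpj ▸ hk, if_pos hk, mul_one]
  · rw [if_neg fun h => hk (h k hik.symm hjk.symm), if_neg hk, mul_zero]

lemma lift2_PhatM_mul_lift2_PhatM {G : Matrix (Fin n) (Fin n) ℂ} (hG : IsUnit G.det) :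
    lift2 (0 : Fin 3) 1 (PhatM n G) * lift2 0 2 (PhatM n G)
      = lift2 1 2 (flipP n) * lift2 0 1 (PhatM n G) := by
  ext f g
  -- Stated on literal vectors: simplifying `![a, b, c] 2` inside an `if` would leave its
  -- `Decidable` instance behind, and later rewrites would fail.
  have hA (a b c : Fin n) : lift2 0 1 (PhatM n G) f ![a, b, c]
      = PhatM n G (f 0, f 1) (a, b) * if f 2 = c then 1 else 0 :=
    lift2_fin3_apply (i := 0) (j := 1) (k := 2) (by decide) (by decide) (by decide) _ f _
  have hB (a b c : Fin n) : lift2 0 2 (PhatM n G) ![a, b, c] g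
      = PhatM n G (a, c) (g 0, g 2) * if b = g 1 then 1 else 0 :=
    lift2_fin3_apply (i := 0) (j := 2) (k := 1) (by decide) (by decide) (by decide) _ _ g
  rw [lift2_flipP_mul, Matrix.submatrix_apply,
    lift2_fin3_apply (i := 0) (j := 1) (k := 2) (by decide) (by decide) (by decide),
    Matrix.mul_apply, sum_fin3_fun]
  simp only [hA, hB, PhatM_apply, swapFactors_apply, id, Equiv.swap_apply_left,
    Equiv.swap_apply_right,
    Equiv.swap_apply_of_ne_of_ne (by decide : (0 : Fin 3) ≠ 1) (by decide : (0 : Fin 3) ≠ 2),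
    mul_ite, ite_mul, mul_one, mul_zero, zero_mul, Finset.sum_ite_irrel, Finset.sum_const_zero,
    Finset.sum_ite_eq, Finset.sum_ite_eq', Finset.mem_univ, if_true]
  calc _ = G⁻¹ (f 0) (g 1) * G (f 2) (g 0) * (G * G⁻¹) (f 1) (g 2) := by
        rw [Matrix.mul_apply, Finset.mul_sum]
        exact Finset.sum_congr rfl fun x _ => by ring
    _ = _ := by rw [Matrix.mul_nonsing_inv _ hG, Matrix.one_apply, mul_ite, mul_one, mul_zero]

theorem stmt3_general (n : ℕ) (G : Matrix (Fin n) (Fin n) ℂ)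
    (hG : IsUnit G.det)
    (x y : ℂ) (hx : x ≠ 0) (hy : y ≠ 0) (hxy : x + y ≠ 0) :
    lift2 (0 : Fin 3) 1 (RhatM n G x) * lift2 (0 : Fin 3) 2 (RhatM n G (x + y)) *
      lift2 (1 : Fin 3) 2 (Rm n y)
  = lift2 (1 : Fin 3) 2 (Rm n y) * lift2 (0 : Fin 3) 2 (RhatM n G (x + y)) *
      lift2 (0 : Fin 3) 1 (RhatM n G x) := by
  have hconj : lift2 (1 : Fin 3) 2 (flipP n) * lift2 0 1 (PhatM n G) * lift2 1 2 (flipP n)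
      = lift2 0 2 (PhatM n G) :=
    lift2_flipP_mul_lift2_mul_lift2_flipP (by decide) (by decide) _
  have hscalars : x⁻¹ * (x + y)⁻¹ + (x + y)⁻¹ * y⁻¹ = x⁻¹ * y⁻¹ := by
    field_simp
    ring
  simp only [RhatM, Rm, lift2_sub, lift2_smul, lift2_one, ← hconj]
  exact yang_baxter_of_involution (lift2_flipP_mul_self 1 2)
    (hconj ▸ lift2_PhatM_mul_lift2_PhatM hG) hscalars

/-- `R̂₁₂(x) R̂₁₃(x+y) R₂₃(y) = R₂₃(y) R̂₁₃(x+y) R̂₁₂(x)` on `(ℂⁿ)^{⊗3}`,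
for the conjugation relative to any non-degenerate symmetric or alternating
bilinear form on `ℂⁿ` (with Gram matrix `G`). -/
theorem stmt3 (n : ℕ) (hn : 1 ≤ n) (G : Matrix (Fin n) (Fin n) ℂ)
    (hG : IsUnit G.det) (hform : Gᵀ = G ∨ Gᵀ = -G)
    (x y : ℂ) (hx : x ≠ 0) (hy : y ≠ 0) (hxy : x + y ≠ 0) :
    lift2 (0 : Fin 3) 1 (RhatM n G x) * lift2 (0 : Fin 3) 2 (RhatM n G (x + y)) *
      lift2 (1 : Fin 3) 2 (Rm n y)
  = lift2 (1 : Fin 3) 2 (Rm n y) * lift2 (0 : Fin 3) 2 (RhatM n G (x + y)) *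
      lift2 (0 : Fin 3) 1 (RhatM n G x) :=
  stmt3_general n G hG x y hx hy hxy
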